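/- Let Φ = R S_{N²}, where S_{N²} = S_{n²} ⊗ S_{δ²} is a STOne matrix and R is a block-diagonal row-selector matrix whose i-th δ²×δ² diagonal block R_i contains exactly one nonzero (unit) entry. Then the preview equation Φ P u = b, with P = I_{n²} ⊗ 1_{δ²}, has the unique solution u = S_{n²} b̄, where b̄ is the n²-vector of selected entries of b. -/

import Mathlib

/-!
The prolongation `P` copies `u` into every block, and every row of `S_{δ²}` sums to `1`, so
`(S_{n²} ⊗ S_{δ²}) P u` equals `(S_{n²} u)_i` throughout block `i`. The selector `R` keeps exactly
the measured entry of each block, so the preview equation says `S_{n²} u = b̄`; and `S_{n²}` is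
an involution, being a Kronecker power of the involution `S_4`.
-/

open Matrix Kronecker

noncomputable def S4 : Matrix (Fin 4) (Fin 4) ℝ :=
  Matrix.of fun i j => if i = j then -1/2 else 1/2

/-- The STOne matrix `S_{4^k}`, the `k`-fold Kronecker power of `S4`
(with `S_{4^{k+1}} = S4 ⊗ S_{4^k}` and base case `S_{4^1} = S4`). -/
noncomputable def STOne : (k : ℕ) → Matrix (Fin (4^k)) (Fin (4^k)) ℝ
  | 0 => 1
  | k + 1 =>
    Matrix.reindex (finProdFinEquiv.trans (finCongr (by ring)))
      (finProdFinEquiv.trans (finCongr (by ring))) (S4 ⊗ₖ STOne k)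

theorem S4_mul_self : S4 * S4 = 1 := by
  ext i j
  fin_cases i <;> fin_cases j <;>
    simp [S4, mul_apply, Fin.sum_univ_four] <;> norm_num

theorem S4_mulVec_one : S4 *ᵥ 1 = 1 := by
  ext i
  fin_cases i <;> simp [S4, mulVec, dotProduct, Fin.sum_univ_four] <;> norm_num

section

variable {α l m n p : Type*} [Fintype m] [Fintype n] [CommSemiring α]

theorem kronecker_mulVec_mul (A : Matrix l m α) (B : Matrix p n α) (u : m → α) (v : n → α) :
    (A ⊗ₖ B) *ᵥ (fun x => u x.1 * v x.2) = fun y => (A *ᵥ u) y.1 * (B *ᵥ v) y.2 := by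
  ext y
  simp only [mulVec, dotProduct, Fintype.sum_prod_type, kroneckerMap_apply, Finset.sum_mul_sum]
  exact Finset.sum_congr rfl fun _ _ => Finset.sum_congr rfl fun _ _ => by ring

theorem kronecker_mulVec_comp_fst (A : Matrix l m α) {B : Matrix p n α} (hB : B *ᵥ 1 = 1)
    (u : m → α) : (A ⊗ₖ B) *ᵥ (fun x => u x.1) = fun y => (A *ᵥ u) y.1 := by
  simpa [hB] using kronecker_mulVec_mul A B u 1

end

theorem STOne_mulVec_one (k : ℕ) : STOne k *ᵥ 1 = 1 := by
  induction k with
  | zero => exact one_mulVec 1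
  | succ k ih =>
    have h := kronecker_mulVec_mul S4 (STOne k) 1 1
    simp only [S4_mulVec_one, ih, Pi.one_apply, mul_one] at h
    rw [STOne, reindex_apply, submatrix_mulVec_equiv]
    exact congrArg (· ∘ _) h

theorem STOne_mul_self (k : ℕ) : STOne k * STOne k = 1 := by
  induction k with
  | zero => exact one_mul 1
  | succ k ih =>
    rw [STOne, reindex_apply, submatrix_mul_equiv, ← mul_kronecker_mul, S4_mul_self, ih,
      one_kronecker_one, submatrix_one_equiv]

section

variable {α ι κ : Type*}

theorem prolongation_mulVec [Fintype ι] [DecidableEq ι] [NonAssocSemiring α] (u : ι → α) :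
    (of fun (x : ι × κ) j => if x.1 = j then 1 else 0 : Matrix (ι × κ) ι α) *ᵥ u =
      fun x => u x.1 := by
  ext x
  simp [mulVec, dotProduct]

theorem rowSelector_mulVec [Fintype ι] [Fintype κ] [DecidableEq ι] [DecidableEq κ]
    [NonAssocSemiring α] (r : ι → κ) (v : ι × κ → α) :
    (of fun (x y : ι × κ) => if x = y ∧ x.2 = r x.1 then 1 else 0 : Matrix _ _ α) *ᵥ v =
      fun x => if x.2 = r x.1 then v x else 0 := by
  ext x
  by_cases h : x.2 = r x.1 <;> simp [mulVec, dotProduct, h]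

theorem selected_eq_iff [DecidableEq κ] [Zero α] {r : ι → κ} {b : ι × κ → α}
    (hb : ∀ x : ι × κ, x.2 ≠ r x.1 → b x = 0) (w : ι → α) :
    (fun x : ι × κ => if x.2 = r x.1 then w x.1 else 0) = b ↔ w = fun i => b (i, r i) := by
  constructor
  · rintro rfl
    simp
  · rintro rfl
    ext ⟨i, k⟩
    by_cases h : k = r i
    · subst h; simp
    · simp [h, hb (i, k) h]

end

theorem mulVec_eq_iff_eq_mulVec_of_mul_self_eq_one {n α : Type*} [Fintype n] [DecidableEq n]
    [Semiring α] {S : Matrix n n α} (hS : S * S = 1) {u v : n → α} :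
    S *ᵥ u = v ↔ u = S *ᵥ v := by
  constructor <;> rintro rfl <;> rw [mulVec_mulVec, hS, one_mulVec]

theorem STOne_preview_unique_general (a d : ℕ)
    (r : Fin (4^a) → Fin (4^d))
    (R : Matrix (Fin (4^a) × Fin (4^d)) (Fin (4^a) × Fin (4^d)) ℝ)
    (hR : R = Matrix.of fun p q => if p = q ∧ p.2 = r p.1 then 1 else 0)
    (P : Matrix (Fin (4^a) × Fin (4^d)) (Fin (4^a)) ℝ)
    (hP : P = Matrix.of fun p j => if p.1 = j then 1 else 0)
    (b : Fin (4^a) × Fin (4^d) → ℝ)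
    (hb : ∀ p : Fin (4^a) × Fin (4^d), p.2 ≠ r p.1 → b p = 0)
    (bbar : Fin (4^a) → ℝ) (hbbar : ∀ i, bbar i = b (i, r i))
    (u : Fin (4^a) → ℝ) :
    (R * (STOne a ⊗ₖ STOne d) * P).mulVec u = b ↔ u = (STOne a).mulVec bbar := by
  subst hR hP
  obtain rfl : bbar = fun i => b (i, r i) := funext hbbar
  rw [← mulVec_mulVec, ← mulVec_mulVec, prolongation_mulVec,
    kronecker_mulVec_comp_fst _ (STOne_mulVec_one d), rowSelector_mulVec, selected_eq_iff hb,
    mulVec_eq_iff_eq_mulVec_of_mul_self_eq_one (STOne_mul_self a)]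

/-- Preview theorem (one measurement per block): with `Φ = R S_{N²}`,
`S_{N²} = S_{n²} ⊗ S_{δ²}`, `R` the row selector choosing row `r i` of block `i`,
and `P = I_{n²} ⊗ 1_{δ²}` the prolongation, the preview equation `Φ P u = b`
has the unique solution `u = S_{n²} b̄` where `b̄ i = b (i, r i)`. -/
theorem STOne_preview_unique (a d : ℕ) (ha : 1 ≤ a) (hd : 1 ≤ d)
    (r : Fin (4^a) → Fin (4^d))
    (R : Matrix (Fin (4^a) × Fin (4^d)) (Fin (4^a) × Fin (4^d)) ℝ)
    (hR : R = Matrix.of fun p q => if p = q ∧ p.2 = r p.1 then 1 else 0)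
    (P : Matrix (Fin (4^a) × Fin (4^d)) (Fin (4^a)) ℝ)
    (hP : P = Matrix.of fun p j => if p.1 = j then 1 else 0)
    (b : Fin (4^a) × Fin (4^d) → ℝ)
    (hb : ∀ p : Fin (4^a) × Fin (4^d), p.2 ≠ r p.1 → b p = 0)
    (bbar : Fin (4^a) → ℝ) (hbbar : ∀ i, bbar i = b (i, r i))
    (u : Fin (4^a) → ℝ) :
    (R * (STOne a ⊗ₖ STOne d) * P).mulVec u = b ↔ u = (STOne a).mulVec bbar :=
  STOne_preview_unique_general a d r R hR P hP b hb bbar hbbar u
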